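/- arXiv:1806.05371 — 4 statements merged into one kernel-verified Lean document; each statement's English description precedes it below -/
import Mathlib

section
/- For every integer p ≥ 3, the sum ∑_{l=2}^{p-1} p/(l(l-1)(p-l)) is strictly less than 3. -/
/-!
Partial fractions split `p / (l (l - 1) (p - l))` into `1 / (l (l - 1)) + 1 / ((l - 1) (p - l))`.
The first part telescopes to `1 - 1 / (p - 1) < 1`. In the second, `a = l - 1` and `b = p - l` are
at least `1` with `a + b = p - 1`, so `a b ≥ a + b - 1 ≥ (p - 1) / 2`, and its `p - 2` terms sum to less
than `2`.
-/

open Finset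

theorem div_mul_mul_sub_eq_one_div_add_one_div {K : Type*} [Field K] {l p : K} (hl : l ≠ 0)
    (hl₁ : l - 1 ≠ 0) (hpl : p - l ≠ 0) :
    p / (l * (l - 1) * (p - l)) = 1 / (l * (l - 1)) + 1 / ((l - 1) * (p - l)) := by
  field_simp
  ring

theorem sum_Icc_one_div_mul_sub_one (n : ℕ) (hn : 1 ≤ n) :
    ∑ l ∈ Icc 2 n, 1 / ((l : ℝ) * (l - 1)) = 1 - 1 / n := by
  induction n, hn using Nat.le_induction with
  | base => simp
  | succ n hn ih =>
    rw [sum_Icc_succ_top (by omega), ih]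
    have hn₀ : (n : ℝ) ≠ 0 := by positivity
    push_cast
    rw [add_sub_cancel_right]
    field_simp
    ring

theorem one_div_mul_le_two_div_add {a b : ℝ} (ha : 1 ≤ a) (hb : 1 ≤ b) :
    1 / (a * b) ≤ 2 / (a + b) := by
  rw [div_le_div_iff₀ (by positivity) (by positivity)]
  nlinarith [mul_nonneg (sub_nonneg.2 ha) (sub_nonneg.2 hb)]

theorem one_le_sub_one_and_one_le_sub_of_mem_Icc {l p : ℕ} (hl : l ∈ Icc 2 (p - 1)) :
    (1 : ℝ) ≤ l - 1 ∧ (1 : ℝ) ≤ p - l := by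
  obtain ⟨hl₂, hlp⟩ := mem_Icc.1 hl
  have hl₂' : (2 : ℝ) ≤ l := by exact_mod_cast hl₂
  have hlp' : ((l + 1 : ℕ) : ℝ) ≤ p := by exact_mod_cast (by omega : l + 1 ≤ p)
  push_cast at hlp'
  constructor <;> linarith

theorem sum_Icc_one_div_sub_one_mul_sub_lt_two (p : ℕ) (hp : 2 ≤ p) :
    ∑ l ∈ Icc 2 (p - 1), 1 / (((l : ℝ) - 1) * ((p : ℝ) - l)) < 2 := by
  have hp₁ : (0 : ℝ) < p - 1 := by
    have : (2 : ℝ) ≤ p := by exact_mod_cast hp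
    linarith
  have term_le : ∀ l ∈ Icc 2 (p - 1), 1 / (((l : ℝ) - 1) * ((p : ℝ) - l)) ≤ 2 / ((p : ℝ) - 1) := by
    intro l hl
    obtain ⟨h₁, h₂⟩ := one_le_sub_one_and_one_le_sub_of_mem_Icc hl
    simpa using one_div_mul_le_two_div_add h₁ h₂
  have hcard : ((Icc 2 (p - 1)).card : ℝ) = p - 2 := by
    rw [Nat.card_Icc, show p - 1 + 1 - 2 = p - 2 by omega, Nat.cast_sub hp]
    norm_num
  calc ∑ l ∈ Icc 2 (p - 1), 1 / (((l : ℝ) - 1) * ((p : ℝ) - l))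
      ≤ (Icc 2 (p - 1)).card * (2 / ((p : ℝ) - 1)) := by
        simpa [nsmul_eq_mul] using sum_le_card_nsmul _ _ _ term_le
    _ = 2 - 2 / ((p : ℝ) - 1) := by
        rw [hcard]
        field_simp
        ring
    _ < 2 := by linarith [div_pos two_pos hp₁]

/-- For every integer `p ≥ 3`, the sum `∑_{l=2}^{p-1} p/(l(l-1)(p-l))` is strictly
less than `3`. -/
theorem sum_p_div_lt_three (p : ℕ) (hp : 3 ≤ p) :
    ∑ l ∈ Finset.Icc 2 (p - 1),
      (p : ℝ) / ((l : ℝ) * ((l : ℝ) - 1) * ((p : ℝ) - (l : ℝ))) < 3 := by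
  have split : ∀ l ∈ Icc 2 (p - 1), (p : ℝ) / ((l : ℝ) * ((l : ℝ) - 1) * ((p : ℝ) - (l : ℝ))) =
      1 / ((l : ℝ) * (l - 1)) + 1 / (((l : ℝ) - 1) * ((p : ℝ) - l)) := by
    intro l hl
    obtain ⟨h₁, h₂⟩ := one_le_sub_one_and_one_le_sub_of_mem_Icc hl
    exact div_mul_mul_sub_eq_one_div_add_one_div (by linarith) (by linarith) (by linarith)
  have telescoping : ∑ l ∈ Icc 2 (p - 1), 1 / ((l : ℝ) * (l - 1)) < 1 := by
    rw [sum_Icc_one_div_mul_sub_one (p - 1) (by omega)]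
    have : (0 : ℝ) < (p - 1 : ℕ) := by exact_mod_cast (by omega : 0 < p - 1)
    linarith [one_div_pos.2 this]
  rw [sum_congr rfl split, sum_add_distrib]
  linarith [sum_Icc_one_div_sub_one_mul_sub_lt_two p (by omega)]
end

section
/- Let g : [0,1] → ℝ be a positive monotone decreasing function, and suppose for some integer n ≥ 4 and constant C > 0 that g(θ) ≤ (1/10) g(θ(1 - 1/n)) + C θ^{-(n-3)} for all θ ∈ (0,1]. Then there exists a constant A (independent of C and g, possibly depending on n only through a universal bound) such that g(θ) < C A θ^{-(n-3)} for all θ ∈ (0,1]. -/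
/-!
With `r = 1 - 1/n`, the forcing term `C θ^{-(n-3)}` grows by the factor
`r^{-(n-3)} ≤ (1 + 1/(n-1))^{n-1} ≤ e < 3` per step `θ ↦ θ r`, so after `k` iterations the
accumulated forcing terms form a geometric series of ratio at most `3/10` and sum to at most
`2 C θ^{-(n-3)}`. The remaining term `10^{-k} g(θ r^k) ≤ 10^{-k} g(0)` drops below
`C ≤ C θ^{-(n-3)}` for large `k`, giving `A = 3`.
-/

open Real Set

lemma one_sub_one_div_zpow_neg_pred_le_exp_one (n : ℕ) :
    (1 - 1 / (n : ℝ)) ^ (-((n : ℤ) - 1)) ≤ exp 1 := by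
  rcases n with _ | k
  · simp [one_le_exp zero_le_one]
  rcases k.eq_zero_or_pos with rfl | hk
  · simp [one_le_exp zero_le_one]
  have hbase : 1 - 1 / ((k + 1 : ℕ) : ℝ) = (1 + (k : ℝ)⁻¹)⁻¹ := by
    have : (0 : ℝ) < k := by exact_mod_cast hk
    push_cast
    field_simp
    ring
  rw [hbase, inv_zpow', neg_neg, show ((k + 1 : ℕ) : ℤ) - 1 = (k : ℤ) by push_cast; ring,
    zpow_natCast]
  exact one_add_inv_pow_le_exp

lemma le_pow_mul_add_two_mul_of_le_mul_add {g h : ℝ → ℝ} {a r ρ : ℝ} (ha : 0 ≤ a)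
    (hr : r ∈ Ioc 0 1) (haρ : a * ρ ≤ 1 / 2) (hh : ∀ θ ∈ Ioc (0 : ℝ) 1, 0 ≤ h θ)
    (hscale : ∀ θ ∈ Ioc (0 : ℝ) 1, h (θ * r) ≤ ρ * h θ)
    (hrec : ∀ θ ∈ Ioc (0 : ℝ) 1, g θ ≤ a * g (θ * r) + h θ) (k : ℕ) :
    ∀ θ ∈ Ioc (0 : ℝ) 1, g θ ≤ a ^ k * g (θ * r ^ k) + 2 * h θ := by
  induction k with
  | zero => intro θ hθ; simpa using hh θ hθ
  | succ k ih =>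
    intro θ hθ
    have hθr : θ * r ∈ Ioc (0 : ℝ) 1 :=
      ⟨mul_pos hθ.1 hr.1, mul_le_one₀ hθ.2 hr.1.le hr.2⟩
    have hnext := ih (θ * r) hθr
    rw [mul_assoc, ← pow_succ'] at hnext
    have hsum : a * (2 * h (θ * r)) ≤ h θ := by
      nlinarith [mul_le_mul_of_nonneg_left (hscale θ hθ) ha, hh θ hθ]
    calc g θ ≤ a * g (θ * r) + h θ := hrec θ hθ
      _ ≤ a * (a ^ k * g (θ * r ^ (k + 1)) + 2 * h (θ * r)) + h θ := by gcongr
      _ ≤ a ^ (k + 1) * g (θ * r ^ (k + 1)) + 2 * h θ := by rw [pow_succ' a k]; linarith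

/-- Friedman-type iteration lemma: if `g : [0,1] → ℝ` is positive and monotone
decreasing and satisfies `g(θ) ≤ (1/10) g(θ(1-1/n)) + C θ^{-(n-3)}` for an integer
`n ≥ 4` and constant `C > 0`, then `g(θ) < C A θ^{-(n-3)}` for a constant `A`
independent of `g` and `C`. -/
theorem friedman_iteration (n : ℕ) (hn : 4 ≤ n) :
    ∃ A : ℝ, ∀ (g : ℝ → ℝ) (C : ℝ), 0 < C →
      (∀ θ ∈ Set.Icc (0 : ℝ) 1, 0 < g θ) →
      (∀ θ₁ ∈ Set.Icc (0 : ℝ) 1, ∀ θ₂ ∈ Set.Icc (0 : ℝ) 1, θ₁ ≤ θ₂ → g θ₂ ≤ g θ₁) →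
      (∀ θ ∈ Set.Ioc (0 : ℝ) 1,
        g θ ≤ (1 / 10) * g (θ * (1 - 1 / (n : ℝ))) + C * θ ^ (-((n : ℤ) - 3))) →
      ∀ θ ∈ Set.Ioc (0 : ℝ) 1, g θ < C * A * θ ^ (-((n : ℤ) - 3)) := by
  refine ⟨3, fun g C hC hpos hmono hrec θ hθ => ?_⟩
  set r : ℝ := 1 - 1 / (n : ℝ)
  set m : ℤ := (n : ℤ) - 3
  have hr : r ∈ Ioc 0 1 := by
    have : 1 / (n : ℝ) ≤ 1 / 4 := by gcongr; exact_mod_cast hn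
    exact ⟨by linarith, by linarith [show 0 ≤ 1 / (n : ℝ) by positivity]⟩
  have hρ : r ^ (-m) ≤ 3 := calc
    r ^ (-m) ≤ r ^ (-((n : ℤ) - 1)) := zpow_le_zpow_right_of_le_one₀ hr.1 hr.2 (by omega)
    _ ≤ exp 1 := one_sub_one_div_zpow_neg_pred_le_exp_one n
    _ ≤ 3 := exp_one_lt_three.le
  have hiter := le_pow_mul_add_two_mul_of_le_mul_add (h := fun θ => C * θ ^ (-m))
    (by norm_num) hr (by linarith : 1 / 10 * r ^ (-m) ≤ 1 / 2)
    (fun θ hθ => mul_nonneg hC.le (zpow_nonneg hθ.1.le _))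
    (fun θ _ => by rw [mul_zpow]; linarith) hrec
  have hg0 : 0 < g 0 := hpos 0 (left_mem_Icc.2 zero_le_one)
  obtain ⟨k, hk⟩ := exists_pow_lt_of_lt_one (div_pos hC hg0) (by norm_num : (1 / 10 : ℝ) < 1)
  rw [lt_div_iff₀ hg0] at hk
  have hθrk : θ * r ^ k ∈ Icc 0 1 := ⟨mul_nonneg hθ.1.le (pow_nonneg hr.1.le k),
    mul_le_one₀ hθ.2 (pow_nonneg hr.1.le k) (pow_le_one₀ hr.1.le hr.2)⟩
  have hgk : g (θ * r ^ k) ≤ g 0 := hmono 0 (left_mem_Icc.2 zero_le_one) _ hθrk hθrk.1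
  have hθm : 1 ≤ θ ^ (-m) := one_le_zpow_of_nonpos₀ hθ.1 hθ.2 (by omega)
  calc g θ ≤ (1 / 10) ^ k * g (θ * r ^ k) + 2 * (C * θ ^ (-m)) := hiter k θ hθ
    _ ≤ (1 / 10) ^ k * g 0 + 2 * (C * θ ^ (-m)) := by gcongr
    _ < C * 3 * θ ^ (-m) := by nlinarith
end

section
/- Let A, B, C, D > 0 with B sufficiently large compared to A (say B ≥ 2A and B ≥ 2), and suppose sequences (a_l), (b_l) of nonnegative reals satisfy a_l ≤ C A^l (l−2)! and b_l ≤ D B^{l−2}(l−2)! for all l ≥ 0 (with m! = 1 for negative m). Then the Leibniz convolution c_p = ∑_{l=0}^{p} C(p,l) a_l b_{p−l} satisfies c_p ≤ M D B^{p−2}(p−1)! for all p ≥ 1, for a constant M depending only on A, C (not on p, B, D). -/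
/-!
Write `m = l`, `k = p - l`. Since `n (n-2)! ≤ n!` and `(n-2)! ≤ n!`, we get
`(m+k)(m-2)!(k-2)! ≤ 2 m! k!`, hence `C(p,l)(l-2)!(p-l-2)! ≤ 2(p-1)!`. So the `l`-th term is
at most `2 C D (A/B)^l B^(p-2) (p-1)!`, and `A/B ≤ 1/2` makes the sum over `l` at most twice
its `l = 0` bound: `M = 4C` works.
-/

def efact (m : ℤ) : ℕ := if m < 0 then 1 else Nat.factorial m.toNat

open Nat

theorem efact_natCast_sub (n k : ℕ) : efact ((n : ℤ) - k) = (n - k)! := by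
  unfold efact
  split_ifs with h
  · rw [Nat.sub_eq_zero_of_le (by omega), factorial_zero]
  · congr 1
    omega

theorem mul_factorial_sub_two_le (n : ℕ) : n * (n - 2)! ≤ n ! := by
  match n with
  | 0 | 1 => simp
  | n + 2 =>
    rw [Nat.add_sub_cancel, factorial_succ, factorial_succ, ← mul_assoc]
    exact Nat.mul_le_mul_right _ (Nat.le_mul_of_pos_right _ n.succ_pos)

theorem add_mul_factorial_sub_two_mul_le (m k : ℕ) :
    (m + k) * ((m - 2)! * (k - 2)!) ≤ 2 * (m ! * k !) := by
  have hm := mul_factorial_sub_two_le m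
  have hk := mul_factorial_sub_two_le k
  have hm' := factorial_le (m.sub_le 2)
  have hk' := factorial_le (k.sub_le 2)
  calc (m + k) * ((m - 2)! * (k - 2)!)
      = m * (m - 2)! * (k - 2)! + (m - 2)! * (k * (k - 2)!) := by ring
    _ ≤ m ! * k ! + m ! * k ! := by gcongr
    _ = 2 * (m ! * k !) := by ring

theorem choose_mul_factorial_sub_two_mul_le {p l : ℕ} (hp : 0 < p) (hl : l ≤ p) :
    p.choose l * (l - 2)! * (p - l - 2)! ≤ 2 * (p - 1)! := by
  refine Nat.le_of_mul_le_mul_left ?_ hp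
  calc p * (p.choose l * (l - 2)! * (p - l - 2)!)
      = p.choose l * ((l + (p - l)) * ((l - 2)! * (p - l - 2)!)) := by
        rw [Nat.add_sub_cancel' hl]; ring
    _ ≤ p.choose l * (2 * (l ! * (p - l)!)) :=
        Nat.mul_le_mul_left _ (add_mul_factorial_sub_two_mul_le _ _)
    _ = 2 * p ! := by rw [← choose_mul_factorial_mul_factorial hl]; ring
    _ = p * (2 * (p - 1)!) := by
        rw [← mul_factorial_pred hp.ne']; ring

theorem pow_mul_zpow_sub_eq {A B : ℝ} (hB : B ≠ 0) {p l : ℕ} (hl : l ≤ p) (j : ℤ) :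
    A ^ l * B ^ (((p - l : ℕ) : ℤ) - j) = (A / B) ^ l * B ^ ((p : ℤ) - j) := by
  rw [Nat.cast_sub hl, div_pow, sub_sub, add_comm, ← sub_sub, zpow_sub₀ hB, zpow_natCast]
  field_simp

theorem choose_mul_mul_le_of_factorial_bounds {A B C D : ℝ} {a b : ℕ → ℝ}
    (hA : 0 ≤ A) (hB : 0 < B) (hAB : 2 * A ≤ B) (hC : 0 ≤ C) (hD : 0 ≤ D)
    (hb0 : ∀ l, 0 ≤ b l) (ha : ∀ l : ℕ, a l ≤ C * A ^ l * (l - 2)!)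
    (hb : ∀ l : ℕ, b l ≤ D * B ^ ((l : ℤ) - 2) * (l - 2)!) {p l : ℕ} (hp : 0 < p)
    (hl : l ≤ p) :
    p.choose l * a l * b (p - l) ≤
      (1 / 2) ^ l * (2 * C * D * B ^ ((p : ℤ) - 2) * (p - 1)!) := by
  have hratio : (A / B) ^ l ≤ (1 / 2) ^ l :=
    pow_le_pow_left₀ (by positivity) (by rw [div_le_div_iff₀ hB two_pos]; linarith) l
  have hcomb : (p.choose l * (l - 2)! * (p - l - 2)! : ℝ) ≤ 2 * (p - 1)! := by
    exact_mod_cast choose_mul_factorial_sub_two_mul_le hp hl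
  calc p.choose l * a l * b (p - l)
      ≤ p.choose l * (C * A ^ l * (l - 2)!) *
          (D * B ^ (((p - l : ℕ) : ℤ) - 2) * (p - l - 2)!) := by
        gcongr
        exacts [hb0 _, ha l, hb _]
    _ = C * D * ((A / B) ^ l * B ^ ((p : ℤ) - 2)) * (p.choose l * (l - 2)! * (p - l - 2)!) := by
        rw [← pow_mul_zpow_sub_eq hB.ne' hl]; ring
    _ ≤ C * D * ((1 / 2) ^ l * B ^ ((p : ℤ) - 2)) * (2 * (p - 1)!) := by gcongr
    _ = (1 / 2) ^ l * (2 * C * D * B ^ ((p : ℤ) - 2) * (p - 1)!) := by ring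

/-- Leibniz convolution estimate: if `a_l ≤ C A^l (l-2)!` and
`b_l ≤ D B^{l-2} (l-2)!` with `B ≥ 2A`, `B ≥ 2`, then
`∑_{l=0}^p C(p,l) a_l b_{p-l} ≤ M D B^{p-2} (p-1)!` for a constant `M`
depending only on `A` and `C`. -/
theorem leibniz_convolution_estimate (A C : ℝ) (hA : 0 < A) (hC : 0 < C) :
    ∃ M : ℝ, ∀ (B D : ℝ) (a b : ℕ → ℝ), 0 < B → 0 < D → 2 * A ≤ B → 2 ≤ B →
      (∀ l, 0 ≤ a l) → (∀ l, 0 ≤ b l) →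
      (∀ l : ℕ, a l ≤ C * A ^ l * (efact ((l : ℤ) - 2) : ℝ)) →
      (∀ l : ℕ, b l ≤ D * B ^ ((l : ℤ) - 2) * (efact ((l : ℤ) - 2) : ℝ)) →
      ∀ p : ℕ, 1 ≤ p →
        ∑ l ∈ Finset.range (p + 1), (Nat.choose p l : ℝ) * a l * b (p - l)
          ≤ M * D * B ^ ((p : ℤ) - 2) * (efact ((p : ℤ) - 1) : ℝ) := by
  refine ⟨4 * C, fun B D a b hB hD hAB _ _ hb0 ha hb p hp => ?_⟩
  have ha' (l : ℕ) : a l ≤ C * A ^ l * (l - 2)! := efact_natCast_sub l 2 ▸ ha l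
  have hb' (l : ℕ) : b l ≤ D * B ^ ((l : ℤ) - 2) * (l - 2)! := efact_natCast_sub l 2 ▸ hb l
  rw [show efact ((p : ℤ) - 1) = (p - 1)! from efact_natCast_sub p 1]
  set Q := 2 * C * D * B ^ ((p : ℤ) - 2) * (p - 1)!
  calc ∑ l ∈ Finset.range (p + 1), (p.choose l : ℝ) * a l * b (p - l)
      ≤ ∑ l ∈ Finset.range (p + 1), (1 / 2 : ℝ) ^ l * Q :=
        Finset.sum_le_sum fun l hl => choose_mul_mul_le_of_factorial_bounds hA.le hB hAB hC.le
          hD.le hb0 ha' hb' hp (Nat.lt_succ_iff.mp (Finset.mem_range.mp hl))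
    _ ≤ 2 * Q := by
        rw [← Finset.sum_mul]
        exact mul_le_mul_of_nonneg_right (sum_geometric_two_le _) (by positivity)
    _ = 4 * C * D * B ^ ((p : ℤ) - 2) * (p - 1)! := by ring
end

section
/- For all integers p ≥ 2, ∑_{k=1}^{p-1} C(p-1,k) (k-3)! (p-1-k)! ≤ C (p-1)! for some absolute constant C, where m! = 1 for negative integers m and C(n,k) is the binomial coefficient. -/
open Finset Nat

lemma efact_natCast (n : ℕ) : efact n = n ! := by
  simp [efact]

lemma choose_mul_efact_sub (a : ℝ) {n k : ℕ} (hk : k ≤ n) :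
    (n.choose k : ℝ) * a * efact ((n : ℤ) - k) = a / k ! * n ! := by
  rw [← Nat.cast_sub hk, efact_natCast, Nat.cast_choose ℝ hk]
  field_simp

lemma sum_efact_sub_three_div_factorial (n : ℕ) :
    ∑ k ∈ Icc 1 (n + 2), (efact ((k : ℤ) - 3) : ℝ) / k !
      = 7 / 4 - 1 / (2 * (n + 2) * (n + 1)) := by
  induction n with
  | zero => norm_num [sum_Icc_succ_top, efact]
  | succ m ih =>
    rw [sum_Icc_succ_top (by omega), ih]
    have hk : ((m + 1 + 2 : ℕ) : ℤ) - 3 = m := by push_cast; ring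
    rw [hk, efact_natCast, show m + 1 + 2 = m + 3 from rfl,
      factorial_succ, factorial_succ, factorial_succ]
    push_cast
    field_simp
    ring

lemma sum_efact_sub_three_div_factorial_le (n : ℕ) :
    ∑ k ∈ Icc 1 n, (efact ((k : ℤ) - 3) : ℝ) / k ! ≤ 7 / 4 := by
  match n with
  | 0 => norm_num
  | 1 => norm_num [efact]
  | m + 2 =>
    rw [sum_efact_sub_three_div_factorial]
    have : (0 : ℝ) ≤ 1 / (2 * (m + 2) * (m + 1)) := by positivity
    linarith

/-- For all `p ≥ 2`, `∑_{k=1}^{p-1} C(p-1,k) (k-3)! (p-1-k)! ≤ C (p-1)!` for an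
absolute constant `C`, with `m! = 1` for negative `m`. -/
theorem binom_efact_sum_le_abs : ∃ C : ℝ, 0 < C ∧ ∀ p : ℕ, 2 ≤ p →
    ∑ k ∈ Finset.Icc 1 (p - 1),
        (Nat.choose (p - 1) k : ℝ) * (efact ((k : ℤ) - 3) : ℝ) *
          (efact ((p : ℤ) - 1 - (k : ℤ)) : ℝ)
      ≤ C * (Nat.factorial (p - 1) : ℝ) := by
  refine ⟨7 / 4, by norm_num, fun p hp => ?_⟩
  have hp1 : (p : ℤ) - 1 = ((p - 1 : ℕ) : ℤ) := by omega
  have hterm : ∀ k ∈ Icc 1 (p - 1),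
      ((p - 1).choose k : ℝ) * efact ((k : ℤ) - 3) * efact ((p : ℤ) - 1 - k)
        = efact ((k : ℤ) - 3) / k ! * (p - 1)! := fun k hk => by
    rw [hp1, choose_mul_efact_sub _ (mem_Icc.mp hk).2]
  rw [sum_congr rfl hterm, ← sum_mul]
  exact mul_le_mul_of_nonneg_right (sum_efact_sub_three_div_factorial_le _) (by positivity)
end
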